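/- Work in the polynomial ring R = ℂ[μ₀, μ₁, …, μ_{2n}] in 2n+1 indeterminates. Let H be the (n+1)×(n+1) Hankel matrix with entries H_{ij} = μ_{i+j} for 0 ≤ i, j ≤ n. For 0 ≤ j ≤ n let C_j denote the determinant of the n×n submatrix of H obtained by deleting the last row and the j-th column, let D_{n,0} denote the determinant of the top-left n×n submatrix of H, and let D_{n+1,0} = det H. Then for all 0 ≤ j, k ≤ n, the product C_j·C_k belongs to the ideal of R generated by D_{n,0} and D_{n+1,0}. -/

import Mathlib

/-!
Write `B = adjugate H` and let `n` also denote the last index. Jacobi's identity for `2 × 2`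
minors of the adjugate says `B j n * B n k - B j k * B n n = det H * (complementary minor)`; it
comes from multiplying `H` by the identity matrix with two rows replaced by rows of `B`, and
cancelling `det H`. Since `H` is symmetric, `B j n` and `B n k` are `± C_j` and `± C_k`, while
`B n n = D_{n,0}`. Finally `det H` is a nonzero polynomial: setting `μ_n = 1` and all other
`μ_i = 0` turns `H` into the anti-diagonal permutation matrix.
-/

open Matrix

namespace Matrix

section Adjugate

variable {ι R : Type*} [Fintype ι] [DecidableEq ι] [CommRing R]

theorem det_one_updateRow_updateRow {i i' : ι} (h : i ≠ i') (a b : ι → R) :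
    (((1 : Matrix ι ι R).updateRow i a).updateRow i' b).det = a i * b i' - a i' * b i := by
  -- Weinstein–Aronszajn turns this rank-two perturbation of `1` into a `2 × 2` determinant.
  let U : Matrix ι (Fin 2) R :=
    of fun r => ![(Pi.single i 1 : ι → R) r, (Pi.single i' 1 : ι → R) r]
  let V : Matrix (Fin 2) ι R := of ![a - Pi.single i 1, b - Pi.single i' 1]
  have hUV : ((1 : Matrix ι ι R).updateRow i a).updateRow i' b = 1 + U * V := by
    ext r c
    rcases eq_or_ne r i' with rfl | hr'
    · simp [U, V, mul_apply, one_eq_pi_single, h.symm]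
    rcases eq_or_ne r i with rfl | hr
    · simp [U, V, mul_apply, hr', one_eq_pi_single]
    · simp [U, V, mul_apply, hr, hr', one_eq_pi_single]
  rw [hUV, det_one_add_mul_comm, det_fin_two]
  simp [U, V, vecMul, dotProduct, h, h.symm, Pi.single_apply]

theorem adjugate_mul_adjugate_sub_adjugate_mul_adjugate (A : Matrix ι ι R)
    (hA : IsLeftRegular A.det) (j : ι) {l k : ι} (hlk : l ≠ k) :
    adjugate A j l * adjugate A l k - adjugate A j k * adjugate A l l =
      A.det * ((A.updateRow l (Pi.single j 1)).updateRow k (Pi.single l 1)).det := by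
  set N := ((1 : Matrix ι ι R).updateRow l (adjugate A j)).updateRow k (adjugate A l)
  have hrow (i : ι) : adjugate A i ᵥ* A = A.det • Pi.single i 1 := by
    rw [← mul_apply_eq_vecMul, adjugate_mul]
    ext c
    simp [one_eq_pi_single]
  have hNA : N * A =
      ((A.updateRow l (A.det • Pi.single j 1)).updateRow k (A.det • Pi.single l 1)) := by
    rw [updateRow_mul, updateRow_mul, Matrix.one_mul, hrow, hrow]
  rw [← det_one_updateRow_updateRow hlk]
  apply hA
  change A.det * N.det = A.det * (A.det * _)
  rw [mul_comm, ← det_mul, hNA, det_updateRow_smul, updateRow_comm _ hlk, det_updateRow_smul,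
    updateRow_comm _ hlk.symm]

theorem adjugate_mul_adjugate_mem_span (A : Matrix ι ι R) (hA : IsLeftRegular A.det)
    (j l k : ι) : adjugate A j l * adjugate A l k ∈ Ideal.span {adjugate A l l, A.det} := by
  rcases eq_or_ne l k with rfl | hlk
  · exact Ideal.mul_mem_left _ _ (Ideal.subset_span (by simp))
  refine Ideal.mem_span_pair.mpr ⟨adjugate A j k,
    ((A.updateRow l (Pi.single j 1)).updateRow k (Pi.single l 1)).det, ?_⟩
  linear_combination -adjugate_mul_adjugate_sub_adjugate_mul_adjugate A hA j hlk

end Adjugate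

section Fin

variable {R : Type*} [CommRing R] {m : ℕ}

theorem det_submatrix_castSucc_succAbove (A : Matrix (Fin (m + 1)) (Fin (m + 1)) R)
    (j : Fin (m + 1)) :
    (A.submatrix Fin.castSucc j.succAbove).det =
      (-1) ^ (m + j : ℕ) * adjugate A j (Fin.last m) := by
  rw [adjugate_fin_succ_eq_det_submatrix, Fin.succAbove_last, Fin.val_last, ← mul_assoc,
    ← mul_pow, neg_one_mul, neg_neg, one_pow, one_mul]

theorem IsSymm.det_submatrix_mul_det_submatrix_mem_span
    {A : Matrix (Fin (m + 1)) (Fin (m + 1)) R} (hA : A.IsSymm) (hdet : IsLeftRegular A.det)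
    (j k : Fin (m + 1)) :
    (A.submatrix Fin.castSucc j.succAbove).det * (A.submatrix Fin.castSucc k.succAbove).det ∈
      Ideal.span {(A.submatrix Fin.castSucc Fin.castSucc).det, A.det} := by
  have hcorner := det_submatrix_castSucc_succAbove A (Fin.last m)
  rw [Fin.succAbove_last, Fin.val_last, Even.neg_one_pow ⟨m, rfl⟩, one_mul] at hcorner
  have hsymm : Matrix.adjugate A k (Fin.last m) = Matrix.adjugate A (Fin.last m) k :=
    hA.adjugate.apply _ _
  rw [hcorner, det_submatrix_castSucc_succAbove, det_submatrix_castSucc_succAbove, hsymm,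
    mul_mul_mul_comm]
  exact Ideal.mul_mem_left _ _ (adjugate_mul_adjugate_mem_span A hdet _ _ _)

end Fin

def hankel {R : Type*} (n : ℕ) (μ : Fin (2 * n + 1) → R) :
    Matrix (Fin (n + 1)) (Fin (n + 1)) R :=
  of fun i j => μ ⟨i + j, by omega⟩

section Hankel

variable {R S : Type*} (n : ℕ)

theorem isSymm_hankel (μ : Fin (2 * n + 1) → R) : (hankel n μ).IsSymm := by
  ext i j
  simp [hankel, Nat.add_comm]

variable [CommRing R] [CommRing S]

theorem _root_.RingHom.mapMatrix_hankel (f : R →+* S) (μ : Fin (2 * n + 1) → R) :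
    f.mapMatrix (hankel n μ) = hankel n (f ∘ μ) :=
  rfl

theorem det_hankel_single :
    (hankel n (Pi.single ⟨n, by omega⟩ (1 : R))).det =
      Equiv.Perm.sign (Fin.revPerm (n := n + 1)) := by
  have : hankel n (Pi.single ⟨n, by omega⟩ (1 : R)) =
      (1 : Matrix _ _ R).submatrix Fin.revPerm id := by
    ext i j
    simp [hankel, one_apply, Pi.single_apply, Fin.ext_iff, Fin.val_rev,
      show (i + j : ℕ) = n ↔ n - i = j by omega]
  rw [this, det_permute, det_one, mul_one]

theorem det_hankel_X_ne_zero [Nontrivial R] :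
    (hankel n (MvPolynomial.X : Fin (2 * n + 1) → MvPolynomial _ R)).det ≠ 0 := by
  intro h
  have := congrArg (MvPolynomial.eval (Pi.single ⟨n, by omega⟩ (1 : R))) h
  rw [RingHom.map_det, RingHom.mapMatrix_hankel, map_zero,
    show _ ∘ MvPolynomial.X = _ from funext fun _ => MvPolynomial.eval_X _,
    det_hankel_single] at this
  exact (Equiv.Perm.sign _).isUnit.map (Int.castRingHom R) |>.ne_zero this

end Hankel

end Matrix

/-- In `R = ℂ[μ₀, …, μ_{2n}]`, with `H` the `(n+1)×(n+1)` Hankel matrix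
of the indeterminates, the products `C_j·C_k` of the cofactors obtained by deleting
the last row and one column lie in the ideal generated by `D_{n,0}` (top-left `n×n`
minor) and `D_{n+1,0} = det H`. -/
theorem cofactor_products_mem_ideal_span_hankel
    (n : ℕ)
    (H : Matrix (Fin (n + 1)) (Fin (n + 1)) (MvPolynomial (Fin (2 * n + 1)) ℂ))
    (hH : ∀ i j : Fin (n + 1), H i j =
      MvPolynomial.X ⟨(i : ℕ) + (j : ℕ), by have hi := i.isLt; have hj := j.isLt; omega⟩)
    (j k : Fin (n + 1)) :
    (H.submatrix Fin.castSucc j.succAbove).det * (H.submatrix Fin.castSucc k.succAbove).det ∈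
      Ideal.span {(H.submatrix Fin.castSucc Fin.castSucc).det, H.det} := by
  obtain rfl : H = hankel n MvPolynomial.X := Matrix.ext hH
  exact (isSymm_hankel n _).det_submatrix_mul_det_submatrix_mem_span
    (IsRegular.of_ne_zero (det_hankel_X_ne_zero n)).left j k
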